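/- arXiv:1712.09629 — 3 statements merged into one kernel-verified Lean document; each statement's English description precedes it below -/
import Mathlib

section
/- If n is odd and n ≥ 3, then for every subset S of X with |S| ≥ 3 there exists a profile u such that the top cycle at u is exactly S. -/
/-! Every voter ranks `S` above its complement, so no majority path enters `S` from outside, and
`S` is the top cycle as soon as it is strongly connected. Enumerate `S` as `s₀, …, s_{k-1}` and
let voter `i` give `s_j` the rank `j - c i (mod k)`: this voter prefers `s_{p+1}` to `s_p` only when
`s_{p+1}` is his favourite, i.e. `c i = p + 1`. With three offsets (`k ≥ 3`), each used by at
most half of the `n ≥ 2` voters, every step `s_p → s_{p+1}` is a weak majority edge, and this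
cycle connects all of `S`. -/

open Finset

/-- The simple majority voting relation `x ≽_u y`:
`|{i : x ≻_{u(i)} y}| ≥ |{i : y ≻_{u(i)} x}|`.  A profile assigns to each
individual `i` a rank equivalence `u i : Fin m ≃ Fin m` (lower rank = better),
so `i` prefers `x` to `y` iff `(u i) x < (u i) y`. -/
def majGE {m n : ℕ} (u : Fin n → (Fin m ≃ Fin m)) (x y : Fin m) : Prop :=
  (univ.filter (fun i : Fin n => (u i) y < (u i) x)).card ≤
    (univ.filter (fun i : Fin n => (u i) x < (u i) y)).card

/-- The top cycle `G_T(u)`: the set of alternatives that reach every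
alternative via the transitive closure `R(u)` of the majority relation. -/
def topCycle {m n : ℕ} (u : Fin n → (Fin m ≃ Fin m)) : Set (Fin m) :=
  {x : Fin m | ∀ y : Fin m, Relation.TransGen (majGE u) x y}

open Fin.NatCast in
theorem Relation.transGen_of_cycle {α : Type*} {k : ℕ} [NeZero k] {r : α → α → Prop}
    {f : Fin k → α} (h : ∀ p, r (f p) (f (p + 1))) (p q : Fin k) :
    Relation.TransGen r (f p) (f q) := by
  have reach : ∀ d : ℕ, Relation.TransGen r (f p) (f (p + d + 1)) := by
    intro d
    induction d with
    | zero => simpa using .single (h p)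
    | succ d ih => simpa [add_assoc] using ih.tail (h _)
  simpa [show p + (q - p - 1) + 1 = q by abel] using reach (q - p - 1 : Fin k).val

theorem Fin.eq_add_one_of_add_one_sub_lt_sub {k : ℕ} [NeZero k] {a c : Fin k}
    (h : a + 1 - c < a - c) : c = a + 1 := by
  rcases k with _ | _ | k
  · exact absurd rfl (NeZero.ne 0)
  · exact Fin.ext (by omega)
  · rw [add_sub_right_comm, Fin.add_one_lt_iff] at h
    rw [eq_comm, ← sub_eq_zero, add_sub_right_comm, h, Fin.last_add_one]

theorem exists_two_mul_card_fiber_le {n k : ℕ} (hn : 2 ≤ n) (hk : 3 ≤ k) :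
    ∃ c : Fin n → Fin k, ∀ d, 2 * #{i | c i = d} ≤ n := by
  let mid : Fin n := ⟨n / 2, by omega⟩
  let c : Fin n → Fin k := fun i =>
    ⟨if i < mid then 0 else if i = mid then 1 else 2, by split_ifs <;> omega⟩
  refine ⟨c, fun d => ?_⟩
  have : #{i | c i = d} ≤ n / 2 := by
    rcases (by omega : d.val = 0 ∨ d.val = 1 ∨ d.val = 2 ∨ 3 ≤ d.val) with hd | hd | hd | hd
    · refine (card_le_card (t := Iio mid) fun i => ?_).trans (by simp [mid])
      simp [c, mid, Fin.ext_iff, Fin.lt_def]; split_ifs <;> omega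
    · refine (card_le_card (t := {mid}) fun i => ?_).trans (by simp; omega)
      simp [c, mid, Fin.ext_iff, Fin.lt_def]; split_ifs <;> omega
    · refine (card_le_card (t := Ioi mid) fun i => ?_).trans (by simp [mid]; omega)
      simp [c, mid, Fin.ext_iff, Fin.lt_def]; split_ifs <;> omega
    · refine (card_le_card (t := ∅) fun i => ?_).trans (by simp)
      simp [c, mid, Fin.ext_iff, Fin.lt_def]; split_ifs <;> omega
  omega

section Majority

variable {m n : ℕ} {u : Fin n → Fin m ≃ Fin m} {x y : Fin m}

theorem majGE_of_forall_lt (h : ∀ i, u i x < u i y) : majGE u x y := by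
  simp [majGE, filter_false_of_mem fun i _ => (h i).not_gt]

theorem not_majGE_of_forall_lt (hn : 0 < n) (h : ∀ i, u i x < u i y) : ¬ majGE u y x := by
  simp [majGE, filter_true_of_mem fun i _ => h i, filter_false_of_mem fun i _ => (h i).not_gt]
  omega

theorem majGE_of_two_mul_card_le (h : 2 * #{i | u i y < u i x} ≤ n) : majGE u x y := by
  rcases eq_or_ne x y with rfl | hxy
  · exact le_rfl
  have hsplit := card_filter_add_card_filter_not (s := univ) (p := fun i => u i y < u i x)
  rw [filter_congr fun i _ => not_lt.trans ((u i).injective.ne hxy).le_iff_lt] at hsplit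
  simp only [card_univ, Fintype.card_fin] at hsplit
  unfold majGE
  omega

theorem topCycle_subset_of_forall_lt (hn : 0 < n) {S : Set (Fin m)} (hS : S.Nonempty)
    (hdom : ∀ i, ∀ x ∈ S, ∀ y ∉ S, u i x < u i y) : topCycle u ⊆ S := by
  intro x hx
  by_contra hxS
  obtain ⟨s, hs⟩ := hS
  have escape : ∀ y, Relation.TransGen (majGE u) x y → y ∉ S := by
    intro y hxy
    induction hxy with
    | single h => exact fun hy => not_majGE_of_forall_lt hn (hdom · _ hy _ hxS) h
    | tail _ h ih => exact fun hy => not_majGE_of_forall_lt hn (hdom · _ hy _ ih) h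
  exact escape s (hx s) hs

theorem subset_topCycle {S : Set (Fin m)} (hdom : ∀ x ∈ S, ∀ y ∉ S, majGE u x y)
    (hconn : ∀ x ∈ S, ∀ y ∈ S, Relation.TransGen (majGE u) x y) : S ⊆ topCycle u := by
  intro x hx y
  by_cases hy : y ∈ S
  exacts [hconn x hx y hy, .single (hdom x hx y hy)]

theorem topCycle_eq_of_forall_lt_of_cycle {k : ℕ} [NeZero k] (hn : 0 < n) {S : Set (Fin m)}
    (f : Fin k → Fin m) (hf : Set.range f = S)
    (hdom : ∀ i, ∀ x ∈ S, ∀ y ∉ S, u i x < u i y)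
    (hcycle : ∀ p, majGE u (f p) (f (p + 1))) : topCycle u = S := by
  subst hf
  refine (topCycle_subset_of_forall_lt hn (Set.range_nonempty f) hdom).antisymm
    (subset_topCycle (fun x hx y hy => majGE_of_forall_lt (hdom · x hx y hy)) ?_)
  rintro _ ⟨p, rfl⟩ _ ⟨q, rfl⟩
  exact Relation.transGen_of_cycle hcycle p q

end Majority

section TopRanking

variable {m : ℕ} (S : Finset (Fin m))

/-- `S` takes the ranks below `S.card`, ordered by `π` via `S.equivFin`; the ranks of the
complement are arbitrary. -/
noncomputable def topRanking (π : Equiv.Perm (Fin S.card)) : Fin m ≃ Fin m :=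
  ((S.equivFin.trans π).trans
    (Fin.castLEquiv (S.card_le_univ.trans_eq (Fintype.card_fin m)))).extendSubtype

variable {S}

theorem val_topRanking_of_mem (π : Equiv.Perm (Fin S.card)) {x : Fin m} (hx : x ∈ S) :
    (topRanking S π x : ℕ) = π (S.equivFin ⟨x, hx⟩) := by
  rw [topRanking, Equiv.extendSubtype_apply_of_mem _ _ hx]
  rfl

theorem topRanking_lt_of_mem_of_notMem (π : Equiv.Perm (Fin S.card)) {x y : Fin m}
    (hx : x ∈ S) (hy : y ∉ S) : topRanking S π x < topRanking S π y := by
  have hy' : ¬ (topRanking S π y : ℕ) < S.card :=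
    Equiv.extendSubtype_not_mem (p := (· ∈ S)) (q := fun j : Fin m => (j : ℕ) < S.card) _ y hy
  rw [Fin.lt_def, val_topRanking_of_mem π hx]
  omega

theorem topRanking_lt_topRanking_iff (π : Equiv.Perm (Fin S.card)) (a b : Fin S.card) :
    topRanking S π (S.equivFin.symm a) < topRanking S π (S.equivFin.symm b) ↔ π a < π b := by
  rw [Fin.lt_def, val_topRanking_of_mem π (S.equivFin.symm a).2,
    val_topRanking_of_mem π (S.equivFin.symm b).2]
  simp only [Subtype.coe_eta, Equiv.apply_symm_apply, Fin.val_fin_lt]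

end TopRanking

noncomputable def rotationProfile {m n : ℕ} (S : Finset (Fin m)) [NeZero S.card]
    (c : Fin n → Fin S.card) : Fin n → Fin m ≃ Fin m :=
  fun i => topRanking S (Equiv.subRight (c i))

theorem majGE_rotationProfile {m n : ℕ} {S : Finset (Fin m)} [NeZero S.card]
    {c : Fin n → Fin S.card} (hc : ∀ d, 2 * #{i | c i = d} ≤ n) (p : Fin S.card) :
    majGE (rotationProfile S c) (S.equivFin.symm p) (S.equivFin.symm (p + 1)) := by
  refine majGE_of_two_mul_card_le ((Nat.mul_le_mul_left 2 (card_le_card ?_)).trans (hc (p + 1)))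
  intro i
  simp only [mem_filter, mem_univ, true_and, rotationProfile, topRanking_lt_topRanking_iff,
    Equiv.subRight_apply]
  exact Fin.eq_add_one_of_add_one_sub_lt_sub

theorem topCycle_range_odd_general (m n : ℕ) (hn : 3 ≤ n)
    (S : Finset (Fin m)) (hS : 3 ≤ S.card) :
    ∃ u : Fin n → (Fin m ≃ Fin m), topCycle u = (S : Set (Fin m)) := by
  have : NeZero S.card := ⟨by omega⟩
  obtain ⟨c, hc⟩ := exists_two_mul_card_fiber_le (by omega : 2 ≤ n) hS
  have hrange : Set.range (fun p => (S.equivFin.symm p : Fin m)) = S :=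
    (S.equivFin.symm.surjective.range_comp Subtype.val).trans Subtype.range_coe
  exact ⟨rotationProfile S c, topCycle_eq_of_forall_lt_of_cycle (by omega) _ hrange
    (fun _ _ hx _ hy => topRanking_lt_of_mem_of_notMem _ hx hy) (majGE_rotationProfile hc)⟩

/-- If `n` is odd with `n ≥ 3`, every subset of `X` of size at least 3 is in
the range of the top cycle correspondence. -/
theorem topCycle_range_odd (m n : ℕ) (hm : 3 ≤ m) (hn : 3 ≤ n) (hno : Odd n)
    (S : Finset (Fin m)) (hS : 3 ≤ S.card) :
    ∃ u : Fin n → (Fin m ≃ Fin m), topCycle u = (S : Set (Fin m)) :=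
  topCycle_range_odd_general m n hn S hS
end

section
/- If n is odd with n ≥ 3 and m is even, then there exists a profile u with |G_C(u)| = m − 2; that is, some (equivalently, by neutrality, every) set of cardinality m − 2 is in the range of the Copeland correspondence. -/
open Finset

/-- `x` defeats `y` by simple majority at `u`:
`|{i : x ≻_{u(i)} y}| > |{i : y ≻_{u(i)} x}|`.  A profile assigns to each
individual `i` a rank equivalence `u i : Fin m ≃ Fin m` (lower rank = better),
so `i` prefers `x` to `y` iff `(u i) x < (u i) y`. -/
def defeats {m n : ℕ} (u : Fin n → (Fin m ≃ Fin m)) (x y : Fin m) : Prop :=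
  (univ.filter (fun i : Fin n => (u i) y < (u i) x)).card <
    (univ.filter (fun i : Fin n => (u i) x < (u i) y)).card

instance {m n : ℕ} (u : Fin n → (Fin m ≃ Fin m)) : DecidableRel (defeats u) :=
  fun _ _ => by unfold defeats; infer_instance

/-- The Copeland score of `x` at `u`: the number of alternatives `x` defeats
by simple majority. -/
def copelandScore {m n : ℕ} (u : Fin n → (Fin m ≃ Fin m)) (x : Fin m) : ℕ :=
  (univ.filter (fun y : Fin m => defeats u x y)).card

/-- The Copeland correspondence `G_C(u)`: alternatives with maximal Copeland
score. -/
def copelandSet {m n : ℕ} (u : Fin n → (Fin m ≃ Fin m)) : Finset (Fin m) :=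
  univ.filter (fun x => ∀ z : Fin m, copelandScore u z ≤ copelandScore u x)

/-! Write `m = 2p + 2`, split the first `2p` alternatives into `L = [0, p)` and `H = [p, 2p)`,
and put `x = 2p`, `y = 2p + 1`. Three voters with the orders `L H x y`, its rotation `H x y L`,
and `y, l_{p-1}, h_{p-1}, …, l_0, h_0, x` produce a majority tournament in which every element
of `L ∪ H` defeats exactly `p + 1` alternatives, `x` defeats only `y`, and `y` defeats only `L`.
The remaining `n - 3` voters come in pairs of opposite orders, which change no majority. -/

section Profiles

variable {m : ℕ}

def prefCount {n : ℕ} (u : Fin n → (Fin m ≃ Fin m)) (x y : Fin m) : ℕ :=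
  #{i | u i x < u i y}

theorem defeats_iff_prefCount_lt {n : ℕ} (u : Fin n → (Fin m ≃ Fin m)) (x y : Fin m) :
    defeats u x y ↔ prefCount u y x < prefCount u x y :=
  Iff.rfl

theorem prefCount_add_prefCount {n : ℕ} (u : Fin n → (Fin m ≃ Fin m)) {x y : Fin m}
    (hxy : x ≠ y) : prefCount u x y + prefCount u y x = n := by
  have hcompl : univ.filter (fun i => u i y < u i x) = univ.filter (fun i => ¬ u i x < u i y) := by
    ext i
    simp [not_lt, le_iff_lt_or_eq, hxy.symm]
  rw [prefCount, prefCount, hcompl, card_filter_add_card_filter_not, card_univ,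
    Fintype.card_fin]

theorem defeats_iff_lt_two_mul_prefCount {n : ℕ} (u : Fin n → (Fin m ≃ Fin m)) {x y : Fin m}
    (hxy : x ≠ y) : defeats u x y ↔ n < 2 * prefCount u x y := by
  have := prefCount_add_prefCount u hxy
  rw [defeats_iff_prefCount_lt]
  omega

theorem prefCount_append {a b : ℕ} (u : Fin a → (Fin m ≃ Fin m))
    (v : Fin b → (Fin m ≃ Fin m)) (x y : Fin m) :
    prefCount (Fin.append u v) x y = prefCount u x y + prefCount v x y := by
  simp only [prefCount, card_filter, Fin.sum_univ_add, Fin.append_left, Fin.append_right]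

theorem defeats_append_iff {a b : ℕ} (u : Fin a → (Fin m ≃ Fin m))
    (v : Fin b → (Fin m ≃ Fin m)) (hv : ∀ x y, prefCount v x y = prefCount v y x)
    (x y : Fin m) : defeats (Fin.append u v) x y ↔ defeats u x y := by
  simp only [defeats_iff_prefCount_lt, prefCount_append, hv x y]
  omega

theorem prefCount_const {n : ℕ} (σ : Fin m ≃ Fin m) (x y : Fin m) :
    prefCount (fun _ : Fin n => σ) x y = if σ x < σ y then n else 0 := by
  rw [prefCount, filter_const]
  split_ifs <;> simp

def balancedProfile (j : ℕ) : Fin (j + j) → (Fin m ≃ Fin m) :=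
  Fin.append (fun _ => Equiv.refl _) (fun _ => Fin.revPerm)

theorem prefCount_balancedProfile_comm (j : ℕ) (x y : Fin m) :
    prefCount (balancedProfile j) x y = prefCount (balancedProfile j) y x := by
  simp only [balancedProfile, prefCount_append, prefCount_const, Equiv.refl_apply,
    Fin.revPerm_apply, Fin.rev_lt_rev]
  exact add_comm _ _

def rankingOf {α : Type*} [LinearOrder α] (f : Fin m → α) : Fin m ≃ Fin m :=
  (Tuple.sort f).symm

theorem rankingOf_lt_rankingOf_iff {α : Type*} [LinearOrder α] {f : Fin m → α}
    (hf : Function.Injective f) (x y : Fin m) :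
    rankingOf f x < rankingOf f y ↔ f x < f y := by
  have hmono : StrictMono (f ∘ Tuple.sort f) :=
    (Tuple.monotone_sort f).strictMono_of_injective (hf.comp (Tuple.sort f).injective)
  simpa [rankingOf] using (hmono.lt_iff_lt (a := (Tuple.sort f).symm x)
    (b := (Tuple.sort f).symm y)).symm

theorem card_filter_fin_val {n : ℕ} (P : ℕ → Prop) [DecidablePred P] :
    #{v : Fin n | P v} = #{b ∈ range n | P b} := by
  simp only [card_filter]
  exact Fin.sum_univ_eq_sum_range (fun b => if P b then 1 else 0) n

end Profiles

namespace CopelandExample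

variable (p : ℕ)

-- Keys of the second and third orders described above; a smaller key means a better rank.
def rotationKey (v : ℕ) : ℕ :=
  if v < p then v + (2 * p + 2) else v

def interleavingKey (v : ℕ) : ℕ :=
  if v < p then 2 * p - 2 * v - 1
  else if v < 2 * p then 4 * p - 2 * v
  else if v = 2 * p then 2 * p + 1
  else 0

def Beats (a b : ℕ) : Prop :=
  (a < p ∧ (a < b ∧ b ≤ a + p ∨ b = 2 * p)) ∨
  (p ≤ a ∧ a < 2 * p ∧ (b + p < a ∨ a < b)) ∨
  (a = 2 * p ∧ b = 2 * p + 1) ∨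
  (a = 2 * p + 1 ∧ b < p)

instance (a b : ℕ) : Decidable (Beats p a b) := by
  unfold Beats; infer_instance

theorem beats_irrefl (a : ℕ) : ¬ Beats p a a := by
  unfold Beats
  omega

theorem rotationKey_injective :
    Function.Injective (fun v : Fin (2 * p + 2) => rotationKey p v) := by
  intro v w h
  simp only [rotationKey] at h
  ext
  split_ifs at h <;> omega

theorem interleavingKey_injective :
    Function.Injective (fun v : Fin (2 * p + 2) => interleavingKey p v) := by
  intro v w h
  simp only [interleavingKey] at h
  ext
  split_ifs at h <;> omega

theorem beats_iff_two_le {a b : ℕ} (ha : a < 2 * p + 2) (hb : b < 2 * p + 2) :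
    Beats p a b ↔ 2 ≤ (if a < b then 1 else 0) +
      (if rotationKey p a < rotationKey p b then 1 else 0) +
      (if interleavingKey p a < interleavingKey p b then 1 else 0) := by
  unfold Beats rotationKey interleavingKey
  split_ifs <;> omega

def threeVoterProfile : Fin 3 → (Fin (2 * p + 2) ≃ Fin (2 * p + 2)) :=
  ![Equiv.refl _, rankingOf (fun v => rotationKey p v), rankingOf (fun v => interleavingKey p v)]

theorem defeats_threeVoterProfile_iff (a b : Fin (2 * p + 2)) :
    defeats (threeVoterProfile p) a b ↔ Beats p a b := by
  by_cases hab : a = b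
  · subst hab
    exact iff_of_false (lt_irrefl _) (beats_irrefl p a)
  have hcount : prefCount (threeVoterProfile p) a b = (if (a : ℕ) < b then 1 else 0) +
      (if rotationKey p a < rotationKey p b then 1 else 0) +
      (if interleavingKey p a < interleavingKey p b then 1 else 0) := by
    simp only [prefCount, card_filter, Fin.sum_univ_three]
    simp only [threeVoterProfile, Matrix.cons_val_zero, Matrix.cons_val_one, Matrix.cons_val,
      Equiv.refl_apply, Fin.lt_def, rankingOf_lt_rankingOf_iff (rotationKey_injective p),
      rankingOf_lt_rankingOf_iff (interleavingKey_injective p)]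
  rw [defeats_iff_lt_two_mul_prefCount _ hab, hcount,
    beats_iff_two_le p a.isLt b.isLt]
  omega

theorem card_filter_beats {a : ℕ} (ha : a < 2 * p + 2) :
    #{b ∈ range (2 * p + 2) | Beats p a b} =
      if a < 2 * p then p + 1 else if a = 2 * p then 1 else p := by
  rcases lt_or_ge a p with hL | hL
  · rw [if_pos (by omega)]
    have hdom : (range (2 * p + 2)).filter (Beats p a) = insert (2 * p) (Ioc a (a + p)) := by
      ext b
      simp only [mem_filter, mem_range, mem_insert, mem_Ioc, Beats]
      omega
    rw [hdom, card_insert_of_notMem (by rw [mem_Ioc]; omega), Nat.card_Ioc]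
    omega
  rcases lt_or_ge a (2 * p) with hH | hH
  · rw [if_pos hH]
    have hdom : (range (2 * p + 2)).filter (Beats p a) = range (a - p) ∪ Ioc a (2 * p + 1) := by
      ext b
      simp only [mem_filter, mem_range, mem_union, mem_Ioc, Beats]
      omega
    have hdisj : Disjoint (range (a - p)) (Ioc a (2 * p + 1)) :=
      disjoint_left.2 fun b hb hb' => by rw [mem_range] at hb; rw [mem_Ioc] at hb'; omega
    rw [hdom, card_union_of_disjoint hdisj, card_range, Nat.card_Ioc]
    omega
  rcases eq_or_lt_of_le hH with hx | hy
  · rw [if_neg (by omega), if_pos hx.symm]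
    have hdom : (range (2 * p + 2)).filter (Beats p a) = {2 * p + 1} := by
      ext b
      simp only [mem_filter, mem_range, mem_singleton, Beats]
      omega
    rw [hdom, card_singleton]
  · rw [if_neg (by omega), if_neg (by omega)]
    have hdom : (range (2 * p + 2)).filter (Beats p a) = range p := by
      ext b
      simp only [mem_filter, mem_range, Beats]
      omega
    rw [hdom, card_range]

def profile (j : ℕ) : Fin (3 + (j + j)) → (Fin (2 * p + 2) ≃ Fin (2 * p + 2)) :=
  Fin.append (threeVoterProfile p) (balancedProfile j)

theorem copelandScore_profile (j : ℕ) (a : Fin (2 * p + 2)) :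
    copelandScore (profile p j) a =
      if a < 2 * p then p + 1 else if a = 2 * p then 1 else p := by
  rw [← card_filter_beats p a.isLt, ← card_filter_fin_val, copelandScore]
  congr 1
  ext b
  simp only [mem_filter, mem_univ, true_and, profile,
    defeats_append_iff _ _ (prefCount_balancedProfile_comm j), defeats_threeVoterProfile_iff]

theorem card_copelandSet_profile (hp : 1 ≤ p) (j : ℕ) :
    #(copelandSet (profile p j)) = 2 * p := by
  have hset : copelandSet (profile p j) =
      univ.filter (fun a : Fin (2 * p + 2) => (a : ℕ) < 2 * p) := by
    ext a
    simp only [copelandSet, mem_filter, mem_univ, true_and, copelandScore_profile]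
    constructor
    · intro h
      have h0 := h 0
      rw [Fin.val_zero, if_pos (by omega : 0 < 2 * p)] at h0
      split_ifs at h0 <;> omega
    · intro ha z
      split_ifs <;> omega
  rw [hset, Fin.card_filter_val_lt]
  omega

end CopelandExample

/-- If `n` is odd with `n ≥ 3` and `m` is even, there is a profile whose
Copeland choice set has cardinality `m − 2`. -/
theorem copeland_m_sub_two (m n : ℕ) (hm : 3 ≤ m) (hno : Odd n)
    (hn : 3 ≤ n) (hme : Even m) :
    ∃ u : Fin n → (Fin m ≃ Fin m), (copelandSet u).card = m - 2 := by
  obtain ⟨p, hp, rfl⟩ : ∃ p, 1 ≤ p ∧ m = 2 * p + 2 := by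
    obtain ⟨c, hc⟩ := hme
    exact ⟨c - 1, by omega, by omega⟩
  obtain ⟨j, rfl⟩ : ∃ j, n = 3 + (j + j) := by
    obtain ⟨c, hc⟩ := hno
    exact ⟨c - 1, by omega⟩
  exact ⟨CopelandExample.profile p j, by
    rw [CopelandExample.card_copelandSet_profile p hp j]; omega⟩
end

section
/- Let S be a subset of X with |S| = k ≥ 1. If k < n, then there exist a profile u and an index vector b of gauge at most 2 such that the set of approval voting winners G_A(u,b) is exactly S. -/
open Finset

/-- The approval voting score `A_S(x,u,b)`: the number of individuals `i` who
have `x` among the top `b i` ranks of their ordering.  A profile assigns to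
each individual `i` a rank equivalence `u i : Fin m ≃ Fin m` (rank `0` is the
top), so `x` is among the top `b i` alternatives of `u i` iff
`((u i) x).val < b i`. -/
def approvalScore {m n : ℕ} (u : Fin n → (Fin m ≃ Fin m)) (b : Fin n → ℕ)
    (x : Fin m) : ℕ :=
  (univ.filter (fun i : Fin n => ((u i) x).val < b i)).card

/-- The approval voting choice set `G_A(u,b)`: alternatives with maximal
approval voting score. -/
def approvalSet {m n : ℕ} (u : Fin n → (Fin m ≃ Fin m)) (b : Fin n → ℕ) :
    Finset (Fin m) :=
  univ.filter (fun x => ∀ y : Fin m, approvalScore u b y ≤ approvalScore u b x)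

/-!
Enumerate `S = {s₀, …, s_{k-1}}` and deal the periodic sequence `s₀, s₁, …` of length `k * t`,
`t = ⌈n / k⌉`, round-robin to the `n` voters: voter `i` approves the items at positions `i` and,
when `i < k * t - n`, also `n + i`. As `n ≤ k * t < n + k ≤ 2 * n`, every ballot has one or two
items (distinct, since a second round is dealt only when `k ∤ n`), every member of `S` is approved
exactly `t ≥ 1` times and nothing else is approved. A voter whose ranking puts its ballot on top,
with index equal to the ballot size, approves exactly that ballot.
-/

namespace Nat

variable {p q : ℕ → Prop} [DecidablePred p] [DecidablePred q]

theorem card_filter_fin_val_eq_count (n : ℕ) : #{i : Fin n | p i} = count p n := by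
  rw [count_eq_card_filter_range, ← Iio_eq_range, ← Fin.map_valEmbedding_univ, filter_map,
    card_map]
  rfl

theorem count_or_of_disjoint (h : ∀ i, ¬(p i ∧ q i)) (n : ℕ) :
    count (fun i => p i ∨ q i) n = count p n + count q n := by
  induction n with
  | zero => simp
  | succ n ih =>
    simp only [count_succ, ih]
    have := h n
    split_ifs <;> first | omega | tauto

theorem count_lt_and {D n : ℕ} (hD : D ≤ n) : count (fun i => i < D ∧ p i) n = count p D := by
  simp only [count_eq_card_filter_range]
  congr 1
  ext i
  simp only [mem_filter, mem_range]
  grind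

theorem count_mod_eq_of_lt {k j : ℕ} (hj : j < k) (t : ℕ) :
    count (fun i => i % k = j) (k * t) = t := by
  have hk : 0 < k := by omega
  simpa [ModEq, mod_eq_of_lt hj, Nat.mul_div_cancel_left t hk] using count_modEq_card (k * t) hk j

theorem exists_le_mul_lt_add {k : ℕ} (hk : 0 < k) (n : ℕ) : ∃ t, n ≤ k * t ∧ k * t < n + k :=
  ⟨(n + k - 1) / k, by
    have := div_add_mod (n + k - 1) k
    have := mod_lt (n + k - 1) hk
    omega⟩

theorem count_apply_mod_eq_apply {α : Type*} [DecidableEq α] {k : ℕ} (hk : 0 < k) {f : Fin k → α}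
    (hf : Function.Injective f) (t : ℕ) (j : Fin k) :
    count (fun p => f ⟨p % k, mod_lt p hk⟩ = f j) (k * t) = t := by
  simp only [hf.eq_iff, Fin.ext_iff]
  exact count_mod_eq_of_lt j.isLt t

theorem mod_ne_add_mod {k n t i : ℕ} (hlo : n ≤ k * t) (hhi : k * t < n + k)
    (hi : i < k * t - n) : i % k ≠ (n + i) % k := by
  intro h
  have hn : k ∣ n := by simpa using dvd_of_mod_eq_zero (sub_mod_eq_zero_of_mod_eq h.symm)
  have := le_of_dvd (by omega) (dvd_sub (dvd_mul_right k t) hn)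
  omega

end Nat

open Nat

section RoundRobin

variable {α : Type*} [DecidableEq α] (s : ℕ → α) (n D : ℕ)

def roundRobinBallot (i : ℕ) : Finset α :=
  if i < D then {s i, s (n + i)} else {s i}

variable {s n D}

theorem mem_roundRobinBallot {i : ℕ} {x : α} :
    x ∈ roundRobinBallot s n D i ↔ s i = x ∨ (i < D ∧ s (n + i) = x) := by
  unfold roundRobinBallot
  split_ifs with h <;> simp [h, eq_comm]

theorem roundRobinBallot_nonempty (i : ℕ) : (roundRobinBallot s n D i).Nonempty :=
  ⟨s i, mem_roundRobinBallot.mpr (Or.inl rfl)⟩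

theorem card_roundRobinBallot_le_two (i : ℕ) : #(roundRobinBallot s n D i) ≤ 2 := by
  unfold roundRobinBallot
  split_ifs
  · exact card_le_two
  · simp

theorem count_mem_roundRobinBallot (hD : D ≤ n) (hs : ∀ i < D, s i ≠ s (n + i)) (x : α) :
    count (fun i => x ∈ roundRobinBallot s n D i) n = count (fun p => s p = x) (n + D) := by
  calc count (fun i => x ∈ roundRobinBallot s n D i) n
      = count (fun i => s i = x ∨ (i < D ∧ s (n + i) = x)) n := by
        simp only [mem_roundRobinBallot]
    _ = count (fun i => s i = x) n + count (fun i => i < D ∧ s (n + i) = x) n :=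
        count_or_of_disjoint (fun i h => hs i h.2.1 (h.1.trans h.2.2.symm)) n
    _ = count (fun p => s p = x) (n + D) := by rw [count_lt_and hD, count_add]

end RoundRobin

theorem exists_perm_val_lt_card_iff_mem {m : ℕ} (A : Finset (Fin m)) :
    ∃ σ : Equiv.Perm (Fin m), ∀ x, (σ x : ℕ) < #A ↔ x ∈ A := by
  have hcard : Fintype.card {x // x ∈ A} = Fintype.card {y : Fin m // (y : ℕ) < #A} := by
    rw [Fintype.card_coe, Fintype.card_subtype, Fin.card_filter_val_lt,
      min_eq_right (card_le_univ A |>.trans_eq (Fintype.card_fin m))]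
  let e := Fintype.equivOfCardEq hcard
  exact ⟨e.extendSubtype, fun x =>
    ⟨fun h => by_contra fun hx => e.extendSubtype_not_mem x hx h, e.extendSubtype_mem x⟩⟩

theorem exists_approvalScore_eq_card {m n : ℕ} (B : Fin n → Finset (Fin m)) :
    ∃ u : Fin n → (Fin m ≃ Fin m),
      ∀ x, approvalScore u (fun i => #(B i)) x = #{i | x ∈ B i} := by
  choose u hu using fun i => exists_perm_val_lt_card_iff_mem (B i)
  exact ⟨u, fun x => by simp only [approvalScore, hu]⟩

theorem approvalSet_eq_of_approvalScore_eq {m n : ℕ} {u : Fin n → (Fin m ≃ Fin m)}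
    {b : Fin n → ℕ} {S : Finset (Fin m)} (hS : S.Nonempty) {t : ℕ} (ht : 0 < t)
    (hmem : ∀ x ∈ S, approvalScore u b x = t) (hnot : ∀ x ∉ S, approvalScore u b x = 0) :
    approvalSet u b = S := by
  obtain ⟨y, hy⟩ := hS
  ext x
  simp only [approvalSet, mem_filter, mem_univ, true_and]
  constructor
  · intro hx
    by_contra hxS
    have := hx y
    rw [hmem y hy, hnot x hxS] at this
    omega
  · intro hx z
    rw [hmem x hx]
    by_cases hz : z ∈ S
    · exact (hmem z hz).le
    · exact (hnot z hz).trans_le (zero_le t)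

theorem approval_range_k_lt_n_general (m n : ℕ)
    (S : Finset (Fin m)) (k : ℕ) (hcard : S.card = k) (hk : 1 ≤ k) (hkn : k < n) :
    ∃ (u : Fin n → (Fin m ≃ Fin m)) (b : Fin n → ℕ),
      (∀ i : Fin n, 1 ≤ b i ∧ b i ≤ m) ∧
      (univ.sup b ≤ 2) ∧
      approvalSet u b = S := by
  obtain ⟨t, hlo, hhi⟩ := exists_le_mul_lt_add hk n
  have ht : 0 < t := Nat.pos_of_ne_zero (by rintro rfl; omega)
  set e := S.orderEmbOfFin hcard
  set s : ℕ → Fin m := fun p => e ⟨p % k, mod_lt p hk⟩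
  have hs : ∀ i < k * t - n, s i ≠ s (n + i) := fun i hi h =>
    mod_ne_add_mod hlo hhi hi (Fin.ext_iff.mp (e.injective h))
  set B : Fin n → Finset (Fin m) := fun i => roundRobinBallot s n (k * t - n) i
  obtain ⟨u, hu⟩ := exists_approvalScore_eq_card B
  have hscore : ∀ x, approvalScore u (fun i => #(B i)) x = count (fun p => s p = x) (k * t) := by
    intro x
    rw [hu, ← Nat.add_sub_cancel' hlo, ← count_mem_roundRobinBallot (by omega) hs]
    exact card_filter_fin_val_eq_count (p := fun i => x ∈ roundRobinBallot s n (k * t - n) i) n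
  refine ⟨u, fun i => #(B i), fun i => ⟨(roundRobinBallot_nonempty _).card_pos,
    (card_le_univ _).trans_eq (Fintype.card_fin m)⟩,
    Finset.sup_le fun i _ => card_roundRobinBallot_le_two _,
    approvalSet_eq_of_approvalScore_eq (card_pos.mp (hcard ▸ hk)) ht ?_ ?_⟩
  · intro x hx
    obtain ⟨j, rfl⟩ : x ∈ Set.range e := by rwa [S.range_orderEmbOfFin hcard]
    rw [hscore]
    exact count_apply_mod_eq_apply hk e.injective t j
  · intro x hx
    rw [hscore]
    exact count_iff_forall_not.mpr fun p _ h => hx (h ▸ S.orderEmbOfFin_mem hcard _)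

/-- If `S ⊆ X` with `|S| = k ≥ 1` and `k < n`, then there are a profile `u`
and an index vector `b` (each component in `{1,…,m}`) of gauge at most `2`
with `G_A(u,b) = S`. -/
theorem approval_range_k_lt_n (m n : ℕ) (hm : 3 ≤ m) (hn : 2 ≤ n)
    (S : Finset (Fin m)) (k : ℕ) (hcard : S.card = k) (hk : 1 ≤ k) (hkn : k < n) :
    ∃ (u : Fin n → (Fin m ≃ Fin m)) (b : Fin n → ℕ),
      (∀ i : Fin n, 1 ≤ b i ∧ b i ≤ m) ∧
      (univ.sup b ≤ 2) ∧
      approvalSet u b = S :=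
  approval_range_k_lt_n_general m n S k hcard hk hkn
end
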